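/- arXiv:1811.08385 — 3 statements merged into one kernel-verified Lean document; each statement's English description precedes it below -/
import Mathlib

section
/- For every nonnegative integer $k_2$, with $a = 6(1+k_2)(1+2k_2)(3+4k_2)$, $m_2 = 12k_2^2+18k_2+7$, $v_2^0 = 3+4k_2$, $v_2^\infty = 2(1+k_2)$, we have $\gcd((2m_2v_2^0+a)v_2^\infty,\ v_2^0+v_2^\infty) = 5+6k_2$. -/
theorem stmt_6 (k₂ : ℕ) (a m₂ v₂0 v₂inf : ℕ)
    (ha : a = 6 * (1 + k₂) * (1 + 2 * k₂) * (3 + 4 * k₂))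
    (hm : m₂ = 12 * k₂ ^ 2 + 18 * k₂ + 7)
    (hv0 : v₂0 = 3 + 4 * k₂) (hvinf : v₂inf = 2 * (1 + k₂)) :
    Nat.gcd ((2 * m₂ * v₂0 + a) * v₂inf) (v₂0 + v₂inf) = 5 + 6 * k₂ := by
  subst ha hm hv0 hvinf
  have hsum : 3 + 4 * k₂ + 2 * (1 + k₂) = 5 + 6 * k₂ := by ring
  have hfactor : (2 * (12 * k₂ ^ 2 + 18 * k₂ + 7) * (3 + 4 * k₂) +
      6 * (1 + k₂) * (1 + 2 * k₂) * (3 + 4 * k₂)) * (2 * (1 + k₂))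
      = (5 + 6 * k₂) * (4 * (3 + 4 * k₂) * (2 + 3 * k₂) * (1 + k₂)) := by ring
  rw [hsum, hfactor]
  exact Nat.gcd_mul_right_left _ _
end

section
/- Let $w_1, w_2, v_3^0, v_3^\infty$ be positive reals. Then $\int_{-1}^1 \big((v_3^0 - v_3^\infty) - (v_3^0 + v_3^\infty)z\big)\big((w_1v_3^\infty + w_2v_3^0) + (w_1v_3^\infty - w_2v_3^0)z\big)^2\,dz = 0$ if and only if, setting $k = \frac{v_3^\infty w_1}{v_3^0 w_2}$, one has $3w_2k^3 + (2w_2-w_1)k^2 - (2w_1-w_2)k - 3w_1 = 0$. -/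
theorem integral_neg_one_one_linear_mul_sq (p q c d : ℝ) :
    ∫ z in (-1:ℝ)..1, (p + q * z) * (c + d * z) ^ 2
      = 2 * p * c ^ 2 + 2 / 3 * (p * d ^ 2 + 2 * q * c * d) := by
  have hprim (x : ℝ) : HasDerivAt
      (fun z => p * c ^ 2 * z + (2 * p * c * d + q * c ^ 2) * (z ^ 2 / 2)
        + (p * d ^ 2 + 2 * q * c * d) * (z ^ 3 / 3) + q * d ^ 2 * (z ^ 4 / 4))
      ((p + q * x) * (c + d * x) ^ 2) x := by
    have h1 := (hasDerivAt_id' x).const_mul (p * c ^ 2)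
    have h2 := ((hasDerivAt_pow 2 x).div_const 2).const_mul (2 * p * c * d + q * c ^ 2)
    have h3 := ((hasDerivAt_pow 3 x).div_const 3).const_mul (p * d ^ 2 + 2 * q * c * d)
    have h4 := ((hasDerivAt_pow 4 x).div_const 4).const_mul (q * d ^ 2)
    refine (((h1.add h2).add h3).add h4).congr_deriv ?_
    norm_num
    ring
  rw [intervalIntegral.integral_eq_sub_of_hasDerivAt (fun x _ => hprim x)
    (by apply Continuous.intervalIntegrable; fun_prop)]
  ring

theorem stmt_9_general (w₁ w₂ v₃0 v₃inf : ℝ) (hw₁ : 0 < w₁) (hw₂ : 0 < w₂)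
    (hv0 : 0 < v₃0) (k : ℝ) (hk : k = (v₃inf * w₁) / (v₃0 * w₂)) :
    (∫ z in (-1:ℝ)..1,
        ((v₃0 - v₃inf) - (v₃0 + v₃inf) * z) *
          ((w₁ * v₃inf + w₂ * v₃0) + (w₁ * v₃inf - w₂ * v₃0) * z) ^ 2) = 0 ↔
    3 * w₂ * k ^ 3 + (2 * w₂ - w₁) * k ^ 2 - (2 * w₁ - w₂) * k - 3 * w₁ = 0 := by
  simp_rw [sub_eq_add_neg (v₃0 - v₃inf), ← neg_mul, integral_neg_one_one_linear_mul_sq]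
  have hv0w₂ : v₃0 * w₂ ≠ 0 := by positivity
  -- clearing the denominator `(v₃0 * w₂) ^ 3` turns the cubic in `k` into a multiple of the integral
  have hcubic : 4 * (v₃0 * w₂) ^ 3 *
        (3 * w₂ * k ^ 3 + (2 * w₂ - w₁) * k ^ 2 - (2 * w₁ - w₂) * k - 3 * w₁)
      = -3 * w₁ * w₂ * (2 * (v₃0 - v₃inf) * (w₁ * v₃inf + w₂ * v₃0) ^ 2 +
          2 / 3 * ((v₃0 - v₃inf) * (w₁ * v₃inf - w₂ * v₃0) ^ 2 +
            2 * -(v₃0 + v₃inf) * (w₁ * v₃inf + w₂ * v₃0) * (w₁ * v₃inf - w₂ * v₃0))) := by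
    rw [hk]; field_simp; ring
  rw [← mul_right_inj' (show -3 * w₁ * w₂ ≠ 0 by simp [hw₁.ne', hw₂.ne']), ← hcubic,
    mul_zero, mul_eq_zero, or_iff_right (by positivity)]

theorem stmt_9 (w₁ w₂ v₃0 v₃inf : ℝ) (hw₁ : 0 < w₁) (hw₂ : 0 < w₂)
    (hv0 : 0 < v₃0) (hvinf : 0 < v₃inf) (k : ℝ) (hk : k = (v₃inf * w₁) / (v₃0 * w₂)) :
    (∫ z in (-1:ℝ)..1,
        ((v₃0 - v₃inf) - (v₃0 + v₃inf) * z) *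
          ((w₁ * v₃inf + w₂ * v₃0) + (w₁ * v₃inf - w₂ * v₃0) * z) ^ 2) = 0 ↔
    3 * w₂ * k ^ 3 + (2 * w₂ - w₁) * k ^ 2 - (2 * w₁ - w₂) * k - 3 * w₁ = 0 :=
  stmt_9_general w₁ w₂ v₃0 v₃inf hw₁ hw₂ hv0 k hk
end

section
/- Let $k > 1$ be rational. Then there exist coprime positive integers $w_1 > w_2$ with $\frac{w_2}{w_1} = \frac{3 + 2k + k^2}{k(1 + 2k + 3k^2)}$, and for these, $k$ is a root of $3w_2k^3 + (2w_2 - w_1)k^2 - (2w_1 - w_2)k - 3w_1 = 0$. -/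
theorem Rat.exists_coprime_nat_div_eq_of_pos_of_lt_one {r : ℚ} (h0 : 0 < r) (h1 : r < 1) :
    ∃ n d : ℕ, 0 < n ∧ n < d ∧ d.Coprime n ∧ (n : ℚ) / d = r := by
  have hnum : 0 < r.num := Rat.num_pos.mpr h0
  have hr : (r.num.natAbs : ℚ) / r.den = r := by
    rw [Nat.cast_natAbs, abs_of_pos hnum, Rat.num_div_den]
  have hden : (0 : ℚ) < r.den := by exact_mod_cast r.pos
  refine ⟨r.num.natAbs, r.den, by omega, ?_, r.reduced.symm, hr⟩
  rw [← hr, div_lt_one hden] at h1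
  exact_mod_cast h1

section Ratio

variable {K : Type*} [Field K] [LinearOrder K] [IsStrictOrderedRing K] {k : K}

lemma ratio_pos (hk : 0 < k) :
    0 < (3 + 2 * k + k ^ 2) / (k * (1 + 2 * k + 3 * k ^ 2)) := by
  positivity

lemma ratio_lt_one (hk : 1 < k) :
    (3 + 2 * k + k ^ 2) / (k * (1 + 2 * k + 3 * k ^ 2)) < 1 := by
  have hk0 : 0 < k := by linarith
  rw [div_lt_one (by positivity)]
  -- the difference of the two sides is (k - 1)(3k² + 4k + 3)
  nlinarith [mul_pos (sub_pos.mpr hk) (by positivity : 0 < 3 * k ^ 2 + 4 * k + 3)]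

end Ratio

lemma cubic_eq_zero_of_div_eq_ratio {K : Type*} [Field K] {k w₁ w₂ : K} (hw₁ : w₁ ≠ 0)
    (hk : k * (1 + 2 * k + 3 * k ^ 2) ≠ 0)
    (h : w₂ / w₁ = (3 + 2 * k + k ^ 2) / (k * (1 + 2 * k + 3 * k ^ 2))) :
    3 * w₂ * k ^ 3 + (2 * w₂ - w₁) * k ^ 2 - (2 * w₁ - w₂) * k - 3 * w₁ = 0 := by
  rw [div_eq_div_iff hw₁ hk] at h
  linear_combination h

theorem stmt_16 (k : ℚ) (hk : 1 < k) :
    ∃ w₁ w₂ : ℕ, 0 < w₂ ∧ w₂ < w₁ ∧ Nat.Coprime w₁ w₂ ∧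
      (w₂ : ℚ) / w₁ = (3 + 2 * k + k ^ 2) / (k * (1 + 2 * k + 3 * k ^ 2)) ∧
      3 * w₂ * k ^ 3 + (2 * (w₂ : ℚ) - w₁) * k ^ 2 - (2 * (w₁ : ℚ) - w₂) * k - 3 * w₁ = 0 := by
  have hk0 : 0 < k := by linarith
  obtain ⟨w₂, w₁, hw₂, hlt, hcop, hw⟩ :=
    Rat.exists_coprime_nat_div_eq_of_pos_of_lt_one (ratio_pos hk0) (ratio_lt_one hk)
  refine ⟨w₁, w₂, hw₂, hlt, hcop, hw, cubic_eq_zero_of_div_eq_ratio ?_ (by positivity) hw⟩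
  exact_mod_cast (hw₂.trans hlt).ne'
end
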